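/- arXiv:1402.3854 — 2 statements merged into one kernel-verified Lean document; each statement's English description precedes it below -/
import Mathlib

section
/- Assume that for every i one has Σ_{j=1}^{N} r_{ij} v_{ij} = −(1/12) Σ_{j=1}^{N} r_{ij} h_i/h_j − 2 C h_i². Then for all i ≠ j, G_{ij}^{(2)} = −( r_{ij} / (5760 h_i h_j) ) · ( θ_{ij} h_j/h_i + θ_{ji} h_i/h_j − 12 r_{ij}² − Σ_{l=1}^{N} ( r_{il} r_{jl} h_i h_j / h_l² − r_{ij} r_{il} h_j / h_l − r_{ij} r_{jl} h_i / h_l ) ) − C r_{ij}² / 120. -/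
/-!
Only the Hamiltonian `H j` carries information beyond bookkeeping: since `v j k = (u k - u j) r j k`,
the genus-1 identity (C2) at `j` reads `-2 H j = -(1/12) ∑ₖ r j k h j / h k - 2 C h j²`, which
eliminates `H j`. Replacing `γ` by `r` in the `k`-sum of `G i j` costs only the terms `k = i, j`,
and these cancel the remaining `r j j` terms of the derivative part. What remains is a rational identity.
-/

open Finset

section

variable {ι : Type*} [Fintype ι]

lemma Fintype.sum_eq_sum_add_of_eq_off_pair [DecidableEq ι] {i j : ι} (hij : i ≠ j) {f g : ι → ℝ}
    (hfg : ∀ k, k ≠ i → k ≠ j → f k = g k) :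
    ∑ k, f k = ∑ k, g k + (f i - g i) + (f j - g j) := by
  have hdiff : ∑ k ∈ ({i, j} : Finset ι), (f k - g k) = ∑ k, (f k - g k) := by
    refine Finset.sum_subset (subset_univ _) fun k _ hk => ?_
    simp only [mem_insert, mem_singleton, not_or] at hk
    rw [hfg k hk.1 hk.2, sub_self]
  rw [sum_pair hij, sum_sub_distrib] at hdiff
  linarith

lemma sum_mul_sub_mul_eq_neg_sum_erase [DecidableEq ι] {u : ι → ℝ} {γ r : ι → ι → ℝ}
    (hroff : ∀ i j, i ≠ j → r i j = γ i j) (j : ι) :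
    ∑ k, r j k * ((u k - u j) * r j k) = -∑ k ∈ univ.erase j, (u j - u k) * γ j k ^ 2 := by
  rw [← add_sum_erase _ _ (mem_univ j), sub_self, zero_mul, mul_zero, zero_add,
    ← sum_neg_distrib]
  refine sum_congr rfl fun k hk => ?_
  rw [hroff j k (ne_of_mem_erase hk).symm]
  ring

lemma sum_gamma_eq_sum_r_sub {h : ι → ℝ} {γ r : ι → ι → ℝ}
    (hγs : ∀ i j, γ i j = γ j i) (hγd : ∀ i, γ i i = 0)
    (hroff : ∀ i j, i ≠ j → r i j = γ i j) {i j : ι} (hij : i ≠ j) :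
    ∑ k, (γ i j * γ i k * γ j k / (5760 * h k ^ 2)
        + (γ i j ^ 2 / (5760 * h k)) * (γ j k / h j - γ i k / h i))
      = ∑ k, (γ i j * r i k * r j k / (5760 * h k ^ 2)
        + (γ i j ^ 2 / (5760 * h k)) * (r j k / h j - r i k / h i))
        - 2 * γ i j ^ 2 * r j j / (5760 * h j ^ 2) := by
  classical
  rw [Fintype.sum_eq_sum_add_of_eq_off_pair hij (g := fun k => γ i j * r i k * r j k
      / (5760 * h k ^ 2) + (γ i j ^ 2 / (5760 * h k)) * (r j k / h j - r i k / h i))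
    fun k hki hkj => by rw [hroff i k (Ne.symm hki), hroff j k (Ne.symm hkj)]]
  rw [hγd, hγd, hroff i j hij, hroff j i hij.symm, hγs j i]
  ring

lemma sum_r_eq_mul_sum_add {h : ι → ℝ} {r : ι → ι → ℝ} {i j : ι} (hi : h i ≠ 0)
    (hj : h j ≠ 0) :
    ∑ k, (r i j * r i k * r j k / (5760 * h k ^ 2)
        + (r i j ^ 2 / (5760 * h k)) * (r j k / h j - r i k / h i))
      = r i j / (5760 * h i * h j) * ∑ l, (r i l * r j l * h i * h j / h l ^ 2
          - r i j * r i l * h j / h l - r i j * r j l * h i / h l)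
        + r i j ^ 2 / (2880 * h j ^ 2) * ∑ k, r j k * h j / h k := by
  rw [mul_sum, mul_sum, ← sum_add_distrib]
  refine sum_congr rfl fun k _ => ?_
  field_simp
  ring

end

theorem Gij_formula_general (N : ℕ)
    (u : Fin N → ℝ)
    (h : Fin N → ℝ) (hh : ∀ i, h i ≠ 0)
    (C : ℝ)
    (γ : Fin N → Fin N → ℝ) (hγs : ∀ i j, γ i j = γ j i) (hγd : ∀ i, γ i i = 0)
    (r : Fin N → Fin N → ℝ)
    (hroff : ∀ i j, i ≠ j → r i j = γ i j)
    (v : Fin N → Fin N → ℝ) (hv : ∀ i j, v i j = (u j - u i) * r i j)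
    (θ : Fin N → Fin N → ℝ)
    (H : Fin N → ℝ)
    (hH : ∀ i, H i = (1 / 2) * ∑ j ∈ Finset.univ.erase i, (u i - u j) * γ i j ^ 2)
    (G : Fin N → Fin N → ℝ)
    (hG : ∀ i j, i ≠ j →
      G i j = -(γ i j ^ 2 * H j) / (120 * h j ^ 2)
        + γ i j ^ 3 / (480 * h i * h j)
        - (γ i j / 5760) * ((r i i * r i j + θ i j) / h i ^ 2
            + (r j j * r i j + θ j i) / h j ^ 2)
        + (γ i j ^ 2 / 5760) * ((r i i * h i) / h i ^ 3 + 3 * (r j j * h j) / h j ^ 3)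
        + ∑ k, (γ i j * γ i k * γ j k / (5760 * h k ^ 2)
            + (γ i j ^ 2 / (5760 * h k)) * (γ j k / h j - γ i k / h i)))
    (hC2 : ∀ i, ∑ j, r i j * v i j
      = -(1 / 12) * ∑ j, r i j * h i / h j - 2 * C * h i ^ 2) :
    ∀ i j, i ≠ j →
      G i j = -(r i j / (5760 * h i * h j))
          * (θ i j * h j / h i + θ j i * h i / h j - 12 * r i j ^ 2
            - ∑ l, (r i l * r j l * h i * h j / h l ^ 2
                - r i j * r i l * h j / h l - r i j * r j l * h i / h l))
        - C * r i j ^ 2 / 120 := by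
  intro i j hij
  have hHj : H j = 1 / 24 * ∑ k, r j k * h j / h k + C * h j ^ 2 := by
    have hrv := sum_mul_sub_mul_eq_neg_sum_erase (u := u) hroff j
    simp only [← hv] at hrv
    linear_combination hH j + (1 / 2 : ℝ) * hrv - (1 / 2 : ℝ) * hC2 j
  have hγij : γ i j = r i j := (hroff i j hij).symm
  rw [hG i j hij, sum_gamma_eq_sum_r_sub hγs hγd hroff hij, hγij,
    sum_r_eq_mul_sum_add (hh i) (hh j), hHj]
  generalize ∑ k, r j k * h j / h k = S
  generalize ∑ l, (r i l * r j l * h i * h j / h l ^ 2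
    - r i j * r i l * h j / h l - r i j * r j l * h i / h l) = P
  have hi := hh i
  have hj := hh j
  field_simp
  ring

/-- Under the genus-1 one-point identity (condition (C2) in canonical
coordinates), the coefficient `G i j` of the genus-2 G-function satisfies
`G i j = -(r i j / (5760 h i h j)) * (θ i j * h j / h i + θ j i * h i / h j
  - 12 r i j ^ 2 - ∑ l, (…)) - C * r i j ^ 2 / 120` for all `i ≠ j`. -/
theorem Gij_formula (N : ℕ) (hN : 2 ≤ N)
    (u : Fin N → ℝ) (hu : Function.Injective u)
    (h : Fin N → ℝ) (hh : ∀ i, h i ≠ 0)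
    (C : ℝ)
    (γ : Fin N → Fin N → ℝ) (hγs : ∀ i j, γ i j = γ j i) (hγd : ∀ i, γ i i = 0)
    (r : Fin N → Fin N → ℝ)
    (hroff : ∀ i j, i ≠ j → r i j = γ i j)
    (hrdiag : ∀ i, r i i = -(∑ j ∈ Finset.univ.erase i, γ i j * h j) / h i)
    (v : Fin N → Fin N → ℝ) (hv : ∀ i j, v i j = (u j - u i) * r i j)
    (θ : Fin N → Fin N → ℝ)
    (hθ : ∀ i j, i ≠ j → θ i j = (u j - u i)⁻¹ * (r i j + ∑ k, r i k * v j k))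
    (H : Fin N → ℝ)
    (hH : ∀ i, H i = (1 / 2) * ∑ j ∈ Finset.univ.erase i, (u i - u j) * γ i j ^ 2)
    (G : Fin N → Fin N → ℝ)
    (hG : ∀ i j, i ≠ j →
      G i j = -(γ i j ^ 2 * H j) / (120 * h j ^ 2)
        + γ i j ^ 3 / (480 * h i * h j)
        - (γ i j / 5760) * ((r i i * r i j + θ i j) / h i ^ 2
            + (r j j * r i j + θ j i) / h j ^ 2)
        + (γ i j ^ 2 / 5760) * ((r i i * h i) / h i ^ 3 + 3 * (r j j * h j) / h j ^ 3)
        + ∑ k, (γ i j * γ i k * γ j k / (5760 * h k ^ 2)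
            + (γ i j ^ 2 / (5760 * h k)) * (γ j k / h j - γ i k / h i)))
    (hC2 : ∀ i, ∑ j, r i j * v i j
      = -(1 / 12) * ∑ j, r i j * h i / h j - 2 * C * h i ^ 2) :
    ∀ i j, i ≠ j →
      G i j = -(r i j / (5760 * h i * h j))
          * (θ i j * h j / h i + θ j i * h i / h j - 12 * r i j ^ 2
            - ∑ l, (r i l * r j l * h i * h j / h l ^ 2
                - r i j * r i l * h j / h l - r i j * r j l * h i / h l))
        - C * r i j ^ 2 / 120 :=
  Gij_formula_general N u h hh C γ hγs hγd r hroff v hv θ H hH G hG hC2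
end

section
/- Define, for every i, φ_i := (1/24) ( −12 Σ_{j=1}^{N} r_{ij} v_{ij} − Σ_{j=1}^{N} (h_i/h_j) r_{ij} ) (the genus-1 one-point function), and, for i ≠ j, φ_{ij} := (1/24) ( 12 r_{ij}² + Σ_{l=1}^{N} ( r_{il} r_{jl} h_i h_j / h_l² − r_{ij} r_{il} h_j / h_l − r_{ij} r_{jl} h_i / h_l ) − ( θ_{ij} h_j/h_i + θ_{ji} h_i/h_j ) − 24 r_{ij} ( (h_j/h_i) φ_i + (h_i/h_j) φ_j ) ) (the genus-1 two-point function). Then, without any further hypotheses, for all i ≠ j one has G_{ij}^{(2)} = ( r_{ij} / (240 h_i h_j) ) φ_{ij} + ( r_{ij}² / 240 ) ( φ_i / h_i² − φ_j / h_j² ). -/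
/-! The identity is purely algebraic. Since `r` agrees with `γ` off the diagonal, the `k`-sum in
`G i j` and the `l`-sum in `φ2 i j` differ summand by summand by `r i j ^ 2 r j k / (2880 h j h k)`,
which is the sum occurring in `φ j`, except at `k = j`, where `γ j j = 0` but `r j j` need not
vanish. The quadratic sum `∑ r j k v j k` in `φ j` is `-2 H j`, because the
diagonal term of `v` vanishes. -/

open Finset

variable {ι : Type*} [DecidableEq ι]

lemma genus2_summand_eq (γ r : ι → ι → ℝ) (h : ι → ℝ) (hh : ∀ i, h i ≠ 0)
    (hγs : ∀ i j, γ i j = γ j i) (hγd : ∀ i, γ i i = 0)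
    (hroff : ∀ i j, i ≠ j → r i j = γ i j) {i j : ι} (hij : i ≠ j) (k : ι) :
    γ i j * γ i k * γ j k / (5760 * h k ^ 2)
        + γ i j ^ 2 / (5760 * h k) * (γ j k / h j - γ i k / h i)
      = r i j / (5760 * h i * h j) * (r i k * r j k * h i * h j / h k ^ 2
            - r i j * r i k * h j / h k - r i j * r j k * h i / h k)
        + r i j ^ 2 / (2880 * h j ^ 2) * (h j / h k * r j k)
        - if k = j then r i j ^ 2 * r j j / (2880 * h j ^ 2) else 0 := by
  have hi := hh i
  have hj := hh j
  have hγij : γ i j = r i j := (hroff i j hij).symm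
  by_cases hkj : k = j
  · subst hkj
    rw [if_pos rfl, hγd, hγij]
    field_simp
    ring
  rw [if_neg hkj]
  by_cases hki : k = i
  · subst hki
    rw [hγd, hγs j, hγij, hroff j k (Ne.symm hij), hγs, hγij]
    field_simp
    ring
  rw [hroff i k (Ne.symm hki), hroff j k (Ne.symm hkj), hγij]
  have hk := hh k
  field_simp
  ring

variable [Fintype ι]

lemma sum_mul_v_eq_neg_sum_erase (u : ι → ℝ) (γ r v : ι → ι → ℝ)
    (hroff : ∀ i j, i ≠ j → r i j = γ i j) (hv : ∀ i j, v i j = (u j - u i) * r i j) (j : ι) :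
    ∑ k, r j k * v j k = -∑ k ∈ univ.erase j, (u j - u k) * γ j k ^ 2 := by
  rw [← add_sum_erase _ _ (mem_univ j), hv j j, sub_self, zero_mul, mul_zero, zero_add,
    ← sum_neg_distrib]
  refine sum_congr rfl fun k hk => ?_
  rw [hv, hroff j k (ne_of_mem_erase hk).symm]
  ring

lemma sum_genus2_summand_eq (γ r : ι → ι → ℝ) (h : ι → ℝ) (hh : ∀ i, h i ≠ 0)
    (hγs : ∀ i j, γ i j = γ j i) (hγd : ∀ i, γ i i = 0)
    (hroff : ∀ i j, i ≠ j → r i j = γ i j) {i j : ι} (hij : i ≠ j) :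
    ∑ k, (γ i j * γ i k * γ j k / (5760 * h k ^ 2)
        + γ i j ^ 2 / (5760 * h k) * (γ j k / h j - γ i k / h i))
      = r i j / (5760 * h i * h j) * ∑ k, (r i k * r j k * h i * h j / h k ^ 2
            - r i j * r i k * h j / h k - r i j * r j k * h i / h k)
        + r i j ^ 2 / (2880 * h j ^ 2) * ∑ k, (h j / h k * r j k)
        - r i j ^ 2 * r j j / (2880 * h j ^ 2) := by
  rw [sum_congr rfl fun k _ => genus2_summand_eq γ r h hh hγs hγd hroff hij k, sum_sub_distrib,
    sum_add_distrib, sum_ite_eq', if_pos (mem_univ j), mul_sum, mul_sum]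

theorem Gij_genus1_expression_general (N : ℕ)
    (u : Fin N → ℝ)
    (h : Fin N → ℝ) (hh : ∀ i, h i ≠ 0)
    (γ : Fin N → Fin N → ℝ) (hγs : ∀ i j, γ i j = γ j i) (hγd : ∀ i, γ i i = 0)
    (r : Fin N → Fin N → ℝ)
    (hroff : ∀ i j, i ≠ j → r i j = γ i j)
    (v : Fin N → Fin N → ℝ) (hv : ∀ i j, v i j = (u j - u i) * r i j)
    (θ : Fin N → Fin N → ℝ)
    (H : Fin N → ℝ)
    (hH : ∀ i, H i = (1 / 2) * ∑ j ∈ Finset.univ.erase i, (u i - u j) * γ i j ^ 2)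
    (G : Fin N → Fin N → ℝ)
    (hG : ∀ i j, i ≠ j →
      G i j = -(γ i j ^ 2 * H j) / (120 * h j ^ 2)
        + γ i j ^ 3 / (480 * h i * h j)
        - (γ i j / 5760) * ((r i i * r i j + θ i j) / h i ^ 2
            + (r j j * r i j + θ j i) / h j ^ 2)
        + (γ i j ^ 2 / 5760) * ((r i i * h i) / h i ^ 3 + 3 * (r j j * h j) / h j ^ 3)
        + ∑ k, (γ i j * γ i k * γ j k / (5760 * h k ^ 2)
            + (γ i j ^ 2 / (5760 * h k)) * (γ j k / h j - γ i k / h i)))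
    (φ : Fin N → ℝ)
    (hφ : ∀ i, φ i = (1 / 24) * (-12 * ∑ j, r i j * v i j
      - ∑ j, (h i / h j) * r i j))
    (φ2 : Fin N → Fin N → ℝ)
    (hφ2 : ∀ i j, i ≠ j →
      φ2 i j = (1 / 24) * (12 * r i j ^ 2
        + ∑ l, (r i l * r j l * h i * h j / h l ^ 2
            - r i j * r i l * h j / h l - r i j * r j l * h i / h l)
        - (θ i j * h j / h i + θ j i * h i / h j)
        - 24 * r i j * ((h j / h i) * φ i + (h i / h j) * φ j))) :
    ∀ i j, i ≠ j →
      G i j = (r i j / (240 * h i * h j)) * φ2 i j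
        + (r i j ^ 2 / 240) * (φ i / h i ^ 2 - φ j / h j ^ 2) := by
  intro i j hij
  have hi := hh i
  have hj := hh j
  rw [hG i j hij, hφ2 i j hij, hφ i, hφ j, sum_genus2_summand_eq γ r h hh hγs hγd hroff hij,
    hH j, sum_mul_v_eq_neg_sum_erase u γ r v hroff hv j, ← hroff i j hij]
  field_simp
  ring

/-- Without any further hypotheses, the coefficient `G i j` of the genus-2
G-function equals
`(r i j / (240 h i h j)) * φ2 i j + (r i j ^ 2 / 240) * (φ i / h i ^ 2 - φ j / h j ^ 2)`
for all `i ≠ j`, where `φ` is the genus-1 one-point function and `φ2` the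
genus-1 two-point function. -/
theorem Gij_genus1_expression (N : ℕ) (hN : 2 ≤ N)
    (u : Fin N → ℝ) (hu : Function.Injective u)
    (h : Fin N → ℝ) (hh : ∀ i, h i ≠ 0)
    (γ : Fin N → Fin N → ℝ) (hγs : ∀ i j, γ i j = γ j i) (hγd : ∀ i, γ i i = 0)
    (r : Fin N → Fin N → ℝ)
    (hroff : ∀ i j, i ≠ j → r i j = γ i j)
    (hrdiag : ∀ i, r i i = -(∑ j ∈ Finset.univ.erase i, γ i j * h j) / h i)
    (v : Fin N → Fin N → ℝ) (hv : ∀ i j, v i j = (u j - u i) * r i j)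
    (θ : Fin N → Fin N → ℝ)
    (hθ : ∀ i j, i ≠ j → θ i j = (u j - u i)⁻¹ * (r i j + ∑ k, r i k * v j k))
    (H : Fin N → ℝ)
    (hH : ∀ i, H i = (1 / 2) * ∑ j ∈ Finset.univ.erase i, (u i - u j) * γ i j ^ 2)
    (G : Fin N → Fin N → ℝ)
    (hG : ∀ i j, i ≠ j →
      G i j = -(γ i j ^ 2 * H j) / (120 * h j ^ 2)
        + γ i j ^ 3 / (480 * h i * h j)
        - (γ i j / 5760) * ((r i i * r i j + θ i j) / h i ^ 2
            + (r j j * r i j + θ j i) / h j ^ 2)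
        + (γ i j ^ 2 / 5760) * ((r i i * h i) / h i ^ 3 + 3 * (r j j * h j) / h j ^ 3)
        + ∑ k, (γ i j * γ i k * γ j k / (5760 * h k ^ 2)
            + (γ i j ^ 2 / (5760 * h k)) * (γ j k / h j - γ i k / h i)))
    (φ : Fin N → ℝ)
    (hφ : ∀ i, φ i = (1 / 24) * (-12 * ∑ j, r i j * v i j
      - ∑ j, (h i / h j) * r i j))
    (φ2 : Fin N → Fin N → ℝ)
    (hφ2 : ∀ i j, i ≠ j →
      φ2 i j = (1 / 24) * (12 * r i j ^ 2
        + ∑ l, (r i l * r j l * h i * h j / h l ^ 2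
            - r i j * r i l * h j / h l - r i j * r j l * h i / h l)
        - (θ i j * h j / h i + θ j i * h i / h j)
        - 24 * r i j * ((h j / h i) * φ i + (h i / h j) * φ j))) :
    ∀ i j, i ≠ j →
      G i j = (r i j / (240 * h i * h j)) * φ2 i j
        + (r i j ^ 2 / 240) * (φ i / h i ^ 2 - φ j / h j ^ 2) :=
  Gij_genus1_expression_general N u h hh γ hγs hγd r hroff v hv θ H hH G hG φ hφ φ2 hφ2
end
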